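/- arXiv:1101.5274 — 3 statements merged into one kernel-verified Lean document; each statement's English description precedes it below -/
import Mathlib

section
/- Let X be a Hausdorff topological vector space, C ⊆ X a nonempty closed convex bounded set, and f : C → C continuous. Then there exists a nonempty separable closed convex set D ⊆ C with f(D) ⊆ D. -/
/-!
Starting from a point `x₀ ∈ C`, repeatedly adjoin the image under `f` and a countable set dense in
the convex hull. The union `U` of this chain is countable and `f`-invariant, and its convex hull
lies in `closure U`; hence `closure U` is closed, convex, separable and, by continuity of `f`,
`f`-invariant. Convex hulls of countable sets have countable dense subsets because the hull of a
finite set is a continuous image of a standard simplex.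
-/

open Set

lemma exists_countable_subset_image_subset_closure {α β : Type*} [TopologicalSpace α]
    [SecondCountableTopology α] [TopologicalSpace β] {f : α → β} {s : Set α}
    (hf : ContinuousOn f s) : ∃ e ⊆ f '' s, e.Countable ∧ f '' s ⊆ closure e := by
  obtain ⟨t, ht_count, ht_dense⟩ := TopologicalSpace.exists_countable_dense s
  refine ⟨s.domRestrict f '' t, ?_, ht_count.image _, ?_⟩
  · rintro _ ⟨x, -, rfl⟩
    exact ⟨x, x.2, rfl⟩
  · rintro _ ⟨x, hx, rfl⟩
    exact image_closure_subset_closure_image hf.domRestrict ⟨⟨x, hx⟩, ht_dense _, rfl⟩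

section ConvexHull

variable {X : Type*} [AddCommGroup X] [Module ℝ X] [TopologicalSpace X] [IsTopologicalAddGroup X]
  [ContinuousSMul ℝ X]

lemma Set.Finite.exists_countable_subset_convexHull_subset_closure {s : Set X} (hs : s.Finite) :
    ∃ e ⊆ convexHull ℝ s, e.Countable ∧ convexHull ℝ s ⊆ closure e := by
  have := hs.fintype
  rw [hs.convexHull_eq_image]
  exact exists_countable_subset_image_subset_closure
    (LinearMap.continuous_of_finiteDimensional _).continuousOn

lemma Set.Countable.exists_countable_subset_convexHull_subset_closure {s : Set X}
    (hs : s.Countable) : ∃ e ⊆ convexHull ℝ s, e.Countable ∧ convexHull ℝ s ⊆ closure e := by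
  choose! e he_sub he_count he_dense using
    fun (t : Set X) (ht : t.Finite) => ht.exists_countable_subset_convexHull_subset_closure
  refine ⟨⋃ t ∈ {t | t.Finite ∧ t ⊆ s}, e t, ?_, ?_, ?_⟩
  · exact iUnion₂_subset fun t ht => (he_sub t ht.1).trans (convexHull_mono ht.2)
  · exact (countable_ofPred_finite_subset hs).biUnion fun t ht => he_count t ht.1
  · rw [convexHull_eq_union_convexHull_finite_subsets]
    refine iUnion₂_subset fun t ht => (he_dense _ t.finite_toSet).trans (closure_mono ?_)
    exact subset_biUnion_of_mem (u := e) ⟨t.finite_toSet, ht⟩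

lemma exists_countable_mapsTo_convexHull_subset_closure {C s : Set X} {f : X → X}
    (hC : Convex ℝ C) (hf : MapsTo f C C) (hsC : s ⊆ C) (hs : s.Countable) :
    ∃ U, s ⊆ U ∧ U ⊆ C ∧ U.Countable ∧ MapsTo f U U ∧ convexHull ℝ U ⊆ closure U := by
  choose! Q hQ_sub hQ_count hQ_dense using
    fun (t : Set X) (ht : t.Countable) => ht.exists_countable_subset_convexHull_subset_closure
  set step : Set X → Set X := fun t => t ∪ f '' t ∪ Q t
  set c : ℕ → Set X := fun n => step^[n] s
  have hc_succ (n : ℕ) : c (n + 1) = step (c n) := Function.iterate_succ_apply' step n s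
  have hc_count (n : ℕ) : (c n).Countable := by
    induction n with
    | zero => exact hs
    | succ n ih => rw [hc_succ]; exact (ih.union (ih.image f)).union (hQ_count _ ih)
  have hc_sub (n : ℕ) : c n ⊆ C := by
    induction n with
    | zero => exact hsC
    | succ n ih =>
      rw [hc_succ]
      exact union_subset (union_subset ih (hf.mono_left ih).image_subset)
        ((hQ_sub _ (hc_count n)).trans (convexHull_min ih hC))
  have hc_mono : Monotone c := monotone_nat_of_le_succ fun n => by
    rw [hc_succ]
    exact subset_union_left.trans subset_union_left
  refine ⟨⋃ n, c n, subset_iUnion c 0, iUnion_subset hc_sub, countable_iUnion hc_count, ?_, ?_⟩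
  · intro x hx
    obtain ⟨n, hn⟩ := mem_iUnion.1 hx
    refine mem_iUnion.2 ⟨n + 1, ?_⟩
    rw [hc_succ]
    exact Or.inl (Or.inr (mem_image_of_mem f hn))
  · have hconvex : Convex ℝ (⋃ n, convexHull ℝ (c n)) :=
      (hc_mono.directed_le.mono_comp _ fun _ _ h => convexHull_mono h).convex_iUnion
        fun _ => convex_convexHull ℝ _
    refine convexHull_min (iUnion_mono fun n => subset_convexHull ℝ _) hconvex |>.trans ?_
    refine iUnion_subset fun n => (hQ_dense _ (hc_count n)).trans (closure_mono ?_)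
    have := subset_iUnion c (n + 1)
    rw [hc_succ] at this
    exact subset_union_right.trans this

end ConvexHull

lemma convex_closure_of_convexHull_subset_closure {𝕜 E : Type*} [Field 𝕜] [PartialOrder 𝕜]
    [AddCommGroup E] [Module 𝕜 E] [TopologicalSpace E] [IsTopologicalAddGroup E]
    [ContinuousConstSMul 𝕜 E]
    {s : Set E} (h : convexHull 𝕜 s ⊆ closure s) : Convex 𝕜 (closure s) := by
  have : closure (convexHull 𝕜 s) = closure s :=
    subset_antisymm (closure_minimal h isClosed_closure) (closure_mono (subset_convexHull 𝕜 s))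
  exact this ▸ (convex_convexHull 𝕜 s).closure

theorem stmt3_general (X : Type*) [AddCommGroup X] [Module ℝ X] [TopologicalSpace X]
    [IsTopologicalAddGroup X] [ContinuousSMul ℝ X]
    (C : Set X) (hC : C.Nonempty)
    (hCcl : IsClosed C) (hCconv : Convex ℝ C)
    (f : X → X) (hf : Set.MapsTo f C C) (hfc : ContinuousOn f C) :
    ∃ D : Set X, D ⊆ C ∧ D.Nonempty ∧ TopologicalSpace.IsSeparable D ∧
      IsClosed D ∧ Convex ℝ D ∧ Set.MapsTo f D D := by
  obtain ⟨x₀, hx₀⟩ := hC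
  obtain ⟨U, hx₀U, hUC, hU_count, hfU, hU_hull⟩ :=
    exists_countable_mapsTo_convexHull_subset_closure hCconv hf (singleton_subset_iff.2 hx₀)
      (countable_singleton x₀)
  have hDC : closure U ⊆ C := closure_minimal hUC hCcl
  exact ⟨closure U, hDC, ⟨x₀, subset_closure (hx₀U rfl)⟩, hU_count.isSeparable.closure,
    isClosed_closure, convex_closure_of_convexHull_subset_closure hU_hull,
    hfU.closure_of_continuousOn (hfc.mono hDC)⟩

theorem stmt3 (X : Type*) [AddCommGroup X] [Module ℝ X] [TopologicalSpace X]
    [IsTopologicalAddGroup X] [ContinuousSMul ℝ X] [T2Space X]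
    (C : Set X) (hC : C.Nonempty) (hCb : Bornology.IsVonNBounded ℝ C)
    (hCcl : IsClosed C) (hCconv : Convex ℝ C)
    (f : X → X) (hf : Set.MapsTo f C C) (hfc : ContinuousOn f C) :
    ∃ D : Set X, D ⊆ C ∧ D.Nonempty ∧ TopologicalSpace.IsSeparable D ∧
      IsClosed D ∧ Convex ℝ D ∧ Set.MapsTo f D D :=
  stmt3_general X C hC hCcl hCconv f hf hfc
end

section
/- Let X be a metrizable locally convex space. Then every bounded sequence in X has either a weakly Cauchy subsequence or a subsequence which is an ℓ1-sequence. -/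
/-- Finitely supported elements of `ℓ¹`, with the `ℓ¹`-norm. -/
noncomputable def l10 : Submodule ℝ (lp (fun _ : ℕ => ℝ) 1) where
  carrier := {f | (Function.support (⇑f : ℕ → ℝ)).Finite}
  zero_mem' := by
    have : (Function.support (⇑(0 : lp (fun _ : ℕ => ℝ) 1) : ℕ → ℝ)) = ∅ := by
      rw [lp.coeFn_zero]; exact Function.support_zero
    show (Function.support (⇑(0 : lp (fun _ : ℕ => ℝ) 1) : ℕ → ℝ)).Finite
    rw [this]; exact Set.finite_empty
  add_mem' := by
    intro a b ha hb
    refine Set.Finite.subset (ha.union hb) ?_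
    intro n hn
    simp only [Set.mem_setOf_eq, Function.mem_support, lp.coeFn_add, Pi.add_apply] at hn
    by_contra h
    simp only [Set.mem_union, Function.mem_support, not_or, not_not] at h
    exact hn (by rw [h.1, h.2, add_zero])
  smul_mem' := by
    intro c a ha
    refine ha.subset ?_
    intro n hn
    simp only [Function.mem_support, lp.coeFn_smul, Pi.smul_apply, smul_eq_mul] at hn
    exact Function.mem_support.2 fun h => hn (by rw [h, mul_zero])

/-- The canonical map `ℓ¹⁰ → X` determined by a sequence `x`. -/
noncomputable def T0 (X : Type*) [AddCommGroup X] [Module ℝ X] (x : ℕ → X) (a : l10) : X :=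
  ∑ᶠ n, ((a : lp (fun _ : ℕ => ℝ) 1) : ℕ → ℝ) n • x n

/-- `x` is an ℓ¹-sequence: `T0` is an isomorphism (a homeomorphic embedding) onto its image. -/
def IsL1Sequence (X : Type*) [AddCommGroup X] [Module ℝ X] [TopologicalSpace X]
    (x : ℕ → X) : Prop :=
  Topology.IsEmbedding (T0 X x)

/-!
The combinatorial core is Rosenthal's dichotomy for a sequence of pairs of sets `(Aₙ, Bₙ)`: some
subsequence is independent, or along some subsequence no point lies in infinitely many `Aₙ` and
in infinitely many `Bₙ`. It follows from the Nash-Williams theorem applied to the finite sets on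
which the alternating pattern `A, B, A, B, …` is not realized by any point.

Fix a countable base `(Uₘ)` of neighbourhoods of `0` and let `Φₘ` be the set of functionals
bounded by `1` on `Uₘ`. Apply the dichotomy to `Aₙ = {φ ∈ Φₘ | φ xₙ < a}` and
`Bₙ = {φ ∈ Φₘ | b < φ xₙ}` for every `m` and all rationals `a < b`. If one of these has an
independent subsequence, then for every finitely supported `w` some `φ ∈ Φₘ` has
`|φ (∑ wᵢ xᵢ)| ≥ (b - a) / 2 * ‖w‖`, which together with the boundedness of `(xₙ)` makes
`w ↦ ∑ wᵢ xᵢ` an embedding. Otherwise a diagonal argument gives one subsequence along which no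
`φ (xₙ)` oscillates infinitely often across a rational gap `a < b`, so every `φ (xₙ)` converges.
-/

open Filter Topology

namespace NashWilliams

open Set

variable (P : Finset ℕ → Prop)

def IsInitialSegment (E : Finset ℕ) (L : Set ℕ) : Prop :=
  ↑E ⊆ L ∧ ∀ a ∈ L, ∀ b ∈ E, a ≤ b → a ∈ E

def above (F : Finset ℕ) (N : Set ℕ) : Set ℕ := {n ∈ N | ∀ f ∈ F, f < n}

def Accepts (F : Finset ℕ) (M : Set ℕ) : Prop :=
  ∀ L ⊆ M, L.Infinite → (∀ l ∈ L, ∀ f ∈ F, f < l) → ∃ E, IsInitialSegment E L ∧ P (F ∪ E)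

def Rejects (F : Finset ℕ) (M : Set ℕ) : Prop :=
  ∀ N ⊆ M, N.Infinite → ¬ Accepts P F N

variable {P}

lemma above_subset (F : Finset ℕ) (N : Set ℕ) : above F N ⊆ N := fun _ h => h.1

lemma infinite_above {N : Set ℕ} (hN : N.Infinite) (F : Finset ℕ) : (above F N).Infinite := by
  refine (hN.sdiff (finite_Iic (F.sup id))).mono fun n hn => ⟨hn.1, fun f hf => ?_⟩
  exact (Finset.le_sup (f := id) hf).trans_lt (not_le.1 hn.2)

lemma Accepts.of_above_subset {F : Finset ℕ} {M N : Set ℕ} (h : Accepts P F M)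
    (hN : above F N ⊆ M) : Accepts P F N :=
  fun L hL hLi hLF => h L (fun l hl => hN ⟨hL hl, hLF l hl⟩) hLi hLF

lemma Rejects.of_above_subset {F : Finset ℕ} {M N : Set ℕ} (h : Rejects P F M)
    (hN : above F N ⊆ M) : Rejects P F N := fun N' hN' hN'i hacc =>
  h (above F N') (fun _ hn => hN ⟨hN' hn.1, hn.2⟩) (infinite_above hN'i F)
    (hacc.of_above_subset ((above_subset F _).trans (above_subset F _)))

lemma accepts_of_prop {F : Finset ℕ} (hF : P F) (M : Set ℕ) : Accepts P F M :=
  fun _ _ _ _ => ⟨∅, ⟨by simp, by simp⟩, by simpa using hF⟩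

lemma Rejects.not_prop {F : Finset ℕ} {M : Set ℕ} (h : Rejects P F M) (hM : M.Infinite) :
    ¬ P F :=
  fun hF => h M subset_rfl hM (accepts_of_prop hF M)

lemma exists_accepts_or_rejects (F : Finset ℕ) {M : Set ℕ} (hM : M.Infinite) :
    ∃ N ⊆ M, N.Infinite ∧ (Accepts P F N ∨ Rejects P F N) := by
  by_cases h : Rejects P F M
  · exact ⟨M, subset_rfl, hM, Or.inr h⟩
  · simp only [Rejects, not_forall, not_not] at h
    obtain ⟨N, hNM, hNi, hN⟩ := h
    exact ⟨N, hNM, hNi, Or.inl hN⟩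

section Fusion

variable {R : Finset ℕ → Set ℕ → Prop} (hR : ∀ F M N, R F M → above F N ⊆ M → R F N)
  {M : Set ℕ} (hdense : ∀ F, ∀ N ⊆ M, N.Infinite → ∃ N' ⊆ N, N'.Infinite ∧ R F N')
include hR hdense

lemma exists_subset_forall_mem_finset (𝒮 : Finset (Finset ℕ)) {N : Set ℕ} (hNM : N ⊆ M)
    (hN : N.Infinite) : ∃ N' ⊆ N, N'.Infinite ∧ ∀ F ∈ 𝒮, R F N' := by
  induction 𝒮 using Finset.induction_on with
  | empty => exact ⟨N, subset_rfl, hN, by simp⟩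
  | insert F 𝒮 _ ih =>
    obtain ⟨N₁, hN₁, hN₁i, h𝒮⟩ := ih
    obtain ⟨N₂, hN₂, hN₂i, hF⟩ := hdense F N₁ (hN₁.trans hNM) hN₁i
    refine ⟨N₂, hN₂.trans hN₁, hN₂i, fun G hG => ?_⟩
    rcases Finset.mem_insert.1 hG with rfl | hG
    · exact hF
    · exact hR G N₁ N₂ (h𝒮 G hG) ((above_subset G N₂).trans hN₂)

lemma exists_mem_subset_forall_subset_Iic {N : Set ℕ} (hNM : N ⊆ M) (hN : N.Infinite) :
    ∃ n ∈ N, ∃ N' ⊆ N ∩ Ioi n, N'.Infinite ∧ ∀ F ⊆ Finset.Iic n, R F N' := by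
  obtain ⟨n, hn⟩ := hN.nonempty
  have hNn : (N ∩ Ioi n).Infinite :=
    (hN.sdiff (finite_Iic n)).mono fun m hm => ⟨hm.1, not_le.1 (mem_Iic.not.1 hm.2)⟩
  obtain ⟨N', hN', hN'i, hR'⟩ := exists_subset_forall_mem_finset hR hdense
    (Finset.Iic n).powerset (inter_subset_left.trans hNM) hNn
  exact ⟨n, hn, N', hN', hN'i, fun F hF => hR' F (Finset.mem_powerset.2 hF)⟩

/-- Fusion: the chosen points `n₀ < n₁ < ⋯` come with shrinking sets `N₀ ⊇ N₁ ⊇ ⋯`, where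
`Nₖ₊₁` lies above `nₖ` and satisfies `R F` for all `F ⊆ [0, nₖ]`; since `R F` only sees the part
of a set above `F`, it passes to `D = {n₁, n₂, …}`. -/
theorem exists_subset_forall_finset_subset (hM : M.Infinite) :
    ∃ D ⊆ M, D.Infinite ∧ ∀ F : Finset ℕ, ↑F ⊆ D → R F D := by
  have step (N : {N : Set ℕ // N ⊆ M ∧ N.Infinite}) :
      ∃ p : ℕ × {N : Set ℕ // N ⊆ M ∧ N.Infinite}, p.1 ∈ N.1 ∧ p.2.1 ⊆ N.1 ∧
        (∀ m ∈ p.2.1, p.1 < m) ∧ ∀ F ⊆ Finset.Iic p.1, R F p.2.1 := by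
    obtain ⟨n, hn, N', hN', hN'i, hR'⟩ := exists_mem_subset_forall_subset_Iic hR hdense N.2.1 N.2.2
    exact ⟨(n, ⟨N', (hN'.trans inter_subset_left).trans N.2.1, hN'i⟩), hn,
      hN'.trans inter_subset_left, fun m hm => (hN' hm).2, hR'⟩
  choose next hnext using step
  let Ns : ℕ → {N : Set ℕ // N ⊆ M ∧ N.Infinite} :=
    fun k => (fun N => (next N).2)^[k] ⟨M, subset_rfl, hM⟩
  let n : ℕ → ℕ := fun k => (next (Ns k)).1
  have hNs_succ : ∀ k, Ns (k + 1) = (next (Ns k)).2 :=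
    fun k => Function.iterate_succ_apply' _ _ _
  have hNs_anti : Antitone fun k => (Ns k).1 :=
    antitone_nat_of_succ_le fun k => by rw [hNs_succ]; exact (hnext _).2.1
  have hn_mem : ∀ k, n k ∈ (Ns k).1 := fun k => (hnext _).1
  have hn_mono : StrictMono n := strictMono_nat_of_lt_succ fun k =>
    (hnext (Ns k)).2.2.1 _ (hNs_succ k ▸ hn_mem (k + 1))
  have hR_n : ∀ k, ∀ F ⊆ Finset.Iic (n k), R F (Ns (k + 1)).1 :=
    fun k F hF => hNs_succ k ▸ (hnext (Ns k)).2.2.2 F hF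
  refine ⟨range fun k => n (k + 1), ?_, infinite_range_of_injective
    (hn_mono.injective.comp (add_left_injective 1)), fun F hF => ?_⟩
  · rintro _ ⟨k, rfl⟩
    exact (Ns (k + 1)).2.1 (hn_mem (k + 1))
  have hex : ∃ j, ∀ f ∈ F, f ≤ n j :=
    ⟨F.sup id, fun f hf => (Finset.le_sup (f := id) hf).trans (hn_mono.id_le _)⟩
  classical
  let j := Nat.find hex
  refine hR F _ _ (hR_n j F fun f hf => Finset.mem_Iic.2 (Nat.find_spec hex f hf)) ?_
  rintro _ ⟨⟨l, rfl⟩, hlF⟩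
  have hjl : j ≤ l := Nat.find_min' hex fun f hf => by
    obtain ⟨i, rfl⟩ := hF hf
    exact hn_mono.monotone (Nat.lt_succ_iff.1 (hn_mono.lt_iff_lt.1 (hlF _ hf)))
  exact hNs_anti (Nat.succ_le_succ hjl) (hn_mem (l + 1))

end Fusion

lemma IsInitialSegment.insert_sInf {E : Finset ℕ} {L : Set ℕ} (hL : L.Nonempty)
    (hE : IsInitialSegment E (L \ {sInf L})) : IsInitialSegment (insert (sInf L) E) L := by
  refine ⟨?_, fun a ha b hb hab => ?_⟩
  · rw [Finset.coe_insert]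
    exact insert_subset (Nat.sInf_mem hL) (hE.1.trans sdiff_subset)
  by_cases haL : a = sInf L
  · exact haL ▸ Finset.mem_insert_self _ _
  rcases Finset.mem_insert.1 hb with rfl | hb
  · exact absurd (le_antisymm hab (Nat.sInf_le ha)) haL
  · exact Finset.mem_insert_of_mem (hE.2 a ⟨ha, haL⟩ b hb hab)

/-- Otherwise the exceptional `n` would form an infinite subset of `D` accepting `F`. -/
lemma finite_setOf_not_rejects_insert {D : Set ℕ}
    (hD : ∀ F : Finset ℕ, ↑F ⊆ D → Accepts P F D ∨ Rejects P F D) {F : Finset ℕ}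
    (hFD : ↑F ⊆ D) (hF : Rejects P F D) :
    {n ∈ above F D | ¬ Rejects P (insert n F) D}.Finite := by
  by_contra hinf
  refine hF _ (fun n hn => hn.1.1) hinf fun L hL hLi hLF => ?_
  obtain ⟨⟨hmD, -⟩, hrej⟩ := hL (Nat.sInf_mem hLi.nonempty)
  have hacc : Accepts P (insert (sInf L) F) D := by
    refine (hD _ ?_).resolve_right hrej
    rw [Finset.coe_insert]
    exact insert_subset hmD hFD
  obtain ⟨E, hE, hPE⟩ := hacc (L \ {sInf L}) (fun l hl => (hL hl.1).1.1)
    (hLi.sdiff (finite_singleton _)) fun l hl f hf => by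
      rcases Finset.mem_insert.1 hf with rfl | hf
      · exact lt_of_le_of_ne (Nat.sInf_le hl.1) (Ne.symm hl.2)
      · exact hLF l hl.1 f hf
  refine ⟨insert (sInf L) E, hE.insert_sInf hLi.nonempty, ?_⟩
  rwa [Finset.union_insert, ← Finset.insert_union]

lemma exists_subset_forall_rejects {D : Set ℕ} (hDi : D.Infinite)
    (hD : ∀ F : Finset ℕ, ↑F ⊆ D → Accepts P F D ∨ Rejects P F D) (h : Rejects P ∅ D) :
    ∃ W ⊆ D, W.Infinite ∧ ∀ F : Finset ℕ, ↑F ⊆ W → Rejects P F D := by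
  obtain ⟨W, hWD, hWi, hW⟩ := exists_subset_forall_finset_subset
    (R := fun F N => ↑F ⊆ D → Rejects P F D → ∀ n ∈ N, (∀ f ∈ F, f < n) →
      Rejects P (insert n F) D)
    (fun F _ _ h hN hFD hF n hn hnF => h hFD hF n (hN ⟨hn, hnF⟩) hnF)
    (fun F N hND hN => by
      by_cases hF : ↑F ⊆ D ∧ Rejects P F D
      · refine ⟨N \ {n ∈ above F D | ¬ Rejects P (insert n F) D}, sdiff_subset,
          hN.sdiff (finite_setOf_not_rejects_insert hD hF.1 hF.2), ?_⟩
        intro _ _ n hn hnF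
        by_contra h
        exact hn.2 ⟨⟨hND hn.1, hnF⟩, h⟩
      · exact ⟨N, subset_rfl, hN, fun hFD hrej => absurd ⟨hFD, hrej⟩ hF⟩) hDi
  refine ⟨W, hWD, hWi, fun F => ?_⟩
  induction F using Finset.induction_on_max with
  | empty => exact fun _ => h
  | insert n F hlt ih =>
    intro hF
    rw [Finset.coe_insert, insert_subset_iff] at hF
    exact hW F hF.2 (hF.2.trans hWD) (ih hF.2) n hF.1 hlt

/-- The Nash-Williams theorem. -/
theorem exists_subset_forall_not_or_forall_initialSegment (P : Finset ℕ → Prop) {M : Set ℕ}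
    (hM : M.Infinite) : ∃ N ⊆ M, N.Infinite ∧ ((∀ F : Finset ℕ, ↑F ⊆ N → ¬ P F) ∨
      ∀ L ⊆ N, L.Infinite → ∃ E, IsInitialSegment E L ∧ P E) := by
  obtain ⟨D, hDM, hDi, hD⟩ := exists_subset_forall_finset_subset
    (R := fun F N => Accepts P F N ∨ Rejects P F N)
    (fun F _ _ h hN => h.imp (·.of_above_subset hN) (·.of_above_subset hN))
    (fun F _ _ hN => exists_accepts_or_rejects F hN) hM
  rcases hD ∅ (by simp) with hacc | hrej
  · exact ⟨D, hDM, hDi, Or.inr fun L hL hLi => by simpa using hacc L hL hLi (by simp)⟩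
  obtain ⟨W, hWD, hWi, hW⟩ := exists_subset_forall_rejects hDi hD hrej
  exact ⟨W, hWD.trans hDM, hWi, Or.inl fun F hF => (hW F hF).not_prop hDi⟩

end NashWilliams

section Rosenthal

open NashWilliams Finset

variable {S : Type*}

def IsIndependent (A B : ℕ → Set S) : Prop :=
  ∀ (p : ℕ → Prop) (n : ℕ), ∃ s, ∀ i < n, (p i → s ∈ A i) ∧ (¬ p i → s ∈ B i)

def RealizesAlternation (A B : ℕ → Set S) (E : Finset ℕ) : Prop :=
  ∃ s, ∀ n ∈ E, (Odd #{m ∈ E | m ≤ n} → s ∈ A n) ∧ (¬ Odd #{m ∈ E | m ≤ n} → s ∈ B n)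

lemma exists_odd_card_iff_of_lt {E : Finset ℕ} {a b : ℕ} (hE : ∀ m ∈ E, m < a) (hab : a < b)
    (q : Prop) : ∃ E' ⊆ insert b (insert a E), b ∈ E' ∧
      (∀ c < a, {m ∈ E' | m ≤ c} = {m ∈ E | m ≤ c}) ∧ (Odd #E' ↔ q) := by
  have haE : a ∉ E := fun h => (hE a h).false
  have hbE : b ∉ E := fun h => (hE b h).asymm hab
  have hfilter : ∀ T ⊆ {a, b}, ∀ c < a, {m ∈ T ∪ E | m ≤ c} = {m ∈ E | m ≤ c} := by
    intro T hT c hc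
    rw [filter_union, filter_false_of_mem fun m hm => ?_, empty_union]
    rcases mem_insert.1 (hT hm) with rfl | hm
    · exact not_le.2 hc
    · exact not_le.2 (hc.trans (mem_singleton.1 hm ▸ hab))
  by_cases h : Odd (#E + 1) ↔ q
  · refine ⟨insert b E, insert_subset_insert _ (subset_insert _ _), mem_insert_self _ _,
      fun c hc => ?_, by rwa [card_insert_of_notMem hbE]⟩
    rw [insert_eq]
    exact hfilter {b} (by simp) c hc
  · refine ⟨insert b (insert a E), subset_rfl, mem_insert_self _ _, fun c hc => ?_, ?_⟩
    · rw [insert_eq, insert_eq, ← union_assoc, ← insert_eq]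
      exact hfilter {b, a} (by simp [pair_comm]) c hc
    · rw [card_insert_of_notMem (by simp [hab.ne', hbE]), card_insert_of_notMem haE,
        Nat.odd_add_one]
      tauto

/-- The even-indexed terms of `f` are fillers that fix the parities. -/
lemma exists_finset_odd_card_iff {f : ℕ → ℕ} (hf : StrictMono f) (p : ℕ → Prop) (k : ℕ) :
    ∃ E ⊆ (range (2 * k)).image f,
      ∀ i < k, f (2 * i + 1) ∈ E ∧ (Odd #{m ∈ E | m ≤ f (2 * i + 1)} ↔ p i) := by
  induction k with
  | zero => exact ⟨∅, by simp, by simp⟩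
  | succ k ih =>
    obtain ⟨E, hE, hEp⟩ := ih
    have hlt : ∀ m ∈ E, m < f (2 * k) := fun m hm => by
      obtain ⟨j, hj, rfl⟩ := mem_image.1 (hE hm)
      exact hf (by simpa using hj)
    obtain ⟨E', hE', hmem, hfilter, hodd⟩ :=
      exists_odd_card_iff_of_lt hlt (hf (by omega : 2 * k < 2 * k + 1)) (p k)
    refine ⟨E', hE'.trans (insert_subset (mem_image_of_mem f (by simp; omega))
      (insert_subset (mem_image_of_mem f (by simp))
        (hE.trans (image_subset_image (range_subset_range.2 (by omega)))))), fun i hi => ?_⟩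
    rcases Nat.lt_succ_iff_lt_or_eq.1 hi with hi | rfl
    · have hfi : f (2 * i + 1) < f (2 * k) := hf (by omega)
      refine ⟨?_, by rw [hfilter _ hfi]; exact (hEp i hi).2⟩
      have h : f (2 * i + 1) ∈ {m ∈ E' | m ≤ f (2 * i + 1)} := by
        rw [hfilter _ hfi]
        exact mem_filter.2 ⟨(hEp i hi).1, le_rfl⟩
      exact (mem_filter.1 h).1
    · have hle : ∀ m ∈ E', m ≤ f (2 * i + 1) := by
        intro m hm
        rcases mem_insert.1 (hE' hm) with rfl | hm
        · exact le_rfl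
        rcases mem_insert.1 hm with rfl | hm
        · exact (hf (by omega)).le
        · exact ((hlt m hm).trans (hf (by omega))).le
      exact ⟨hmem, by rwa [filter_true_of_mem hle]⟩

lemma card_filter_le_of_isInitialSegment {g : ℕ → ℕ} (hg : StrictMono g) {E : Finset ℕ}
    (hE : IsInitialSegment E (Set.range g)) {t : ℕ} (ht : g t ∈ E) :
    #{m ∈ E | m ≤ g t} = t + 1 := by
  have : {m ∈ E | m ≤ g t} = (range (t + 1)).image g := by
    ext m
    simp only [mem_filter, mem_image, mem_range, Nat.lt_succ_iff]
    constructor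
    · rintro ⟨hm, hmt⟩
      obtain ⟨u, rfl⟩ := hE.1 hm
      exact ⟨u, hg.le_iff_le.1 hmt, rfl⟩
    · rintro ⟨u, hu, rfl⟩
      exact ⟨hE.2 _ ⟨u, rfl⟩ _ ht (hg.monotone hu), hg.monotone hu⟩
  rw [this, card_image_of_injective _ hg.injective, card_range]

/-- Rosenthal's dichotomy. -/
theorem exists_isIndependent_or_finite (A B : ℕ → Set S) {M : Set ℕ} (hM : M.Infinite) :
    (∃ k, StrictMono k ∧ Set.range k ⊆ M ∧ IsIndependent (A ∘ k) (B ∘ k)) ∨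
      ∃ N ⊆ M, N.Infinite ∧ ∀ s, {n ∈ N | s ∈ A n}.Finite ∨ {n ∈ N | s ∈ B n}.Finite := by
  obtain ⟨N, hNM, hNi, hN | hN⟩ :=
    exists_subset_forall_not_or_forall_initialSegment (fun E => ¬ RealizesAlternation A B E) hM
  · set f := Nat.nth (· ∈ N)
    have hf : StrictMono f := Nat.nth_strictMono hNi
    have hfN : ∀ n, f n ∈ N := Nat.nth_mem_of_infinite hNi
    refine Or.inl ⟨fun i => f (2 * i + 1), fun i j h => hf (by omega), ?_, fun p n => ?_⟩
    · rintro _ ⟨i, rfl⟩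
      exact hNM (hfN _)
    obtain ⟨E, hE, hEp⟩ := exists_finset_odd_card_iff hf p n
    obtain ⟨s, hs⟩ := not_not.1 <| hN E fun m hm => by
      obtain ⟨j, -, rfl⟩ := mem_image.1 (hE hm)
      exact hfN j
    refine ⟨s, fun i hi => ?_⟩
    obtain ⟨hmem, hodd⟩ := hEp i hi
    exact ⟨fun h => (hs _ hmem).1 (hodd.2 h), fun h => (hs _ hmem).2 (mt hodd.1 h)⟩
  refine Or.inr ⟨N, hNM, hNi, fun s => ?_⟩
  by_contra! h
  -- Alternating between indices with `s ∈ A` and with `s ∈ B`, `s` realizes the alternation on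
  -- every initial segment of `range g`.
  obtain ⟨g, hg, hgN⟩ := Filter.extraction_forall_of_frequently
    (P := fun i n => n ∈ N ∧ if Even i then s ∈ A n else s ∈ B n) fun i => by
      rw [Nat.frequently_atTop_iff_infinite]
      split_ifs
      exacts [h.1, h.2]
  obtain ⟨E, hE, hEP⟩ := hN (Set.range g) (by rintro _ ⟨i, rfl⟩; exact (hgN i).1)
    (Set.infinite_range_of_injective hg.injective)
  refine hEP ⟨s, fun n hn => ?_⟩
  obtain ⟨t, rfl⟩ := hE.1 hn
  rw [card_filter_le_of_isInitialSegment hg hE hn, Nat.odd_add_one, not_not,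
    Nat.not_odd_iff_even]
  have hst := (hgN t).2
  split_ifs at hst with ht
  · exact ⟨fun _ => hst, fun h => absurd ht (Nat.not_even_iff_odd.2 h)⟩
  · exact ⟨fun h => absurd h ht, fun _ => hst⟩

end Rosenthal

theorem exists_infinite_forall_of_dense {ι : Type*} [Countable ι] {Q : ι → Set ℕ → Prop}
    (hQ : ∀ j M N, Q j M → (N \ M).Finite → Q j N)
    (hdense : ∀ j M, M.Infinite → ∃ N ⊆ M, N.Infinite ∧ Q j N) :
    ∃ D : Set ℕ, D.Infinite ∧ ∀ j, Q j D := by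
  cases isEmpty_or_nonempty ι
  · exact ⟨Set.univ, Set.infinite_univ, isEmptyElim⟩
  obtain ⟨e, he⟩ := exists_surjective_nat ι
  choose N hNsub hNi hNQ using hdense
  let Ms : ℕ → {M : Set ℕ // M.Infinite} := fun k =>
    Nat.rec ⟨Set.univ, Set.infinite_univ⟩ (fun k M => ⟨N (e k) M.1 M.2, hNi _ _ _⟩) k
  have hMs_anti : Antitone fun k => (Ms k).1 :=
    antitone_nat_of_succ_le fun k => hNsub (e k) (Ms k).1 (Ms k).2
  -- `range g` is almost contained in every `Ms k`.
  obtain ⟨g, hg, hgM⟩ := Filter.extraction_forall_of_frequently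
    (P := fun k n => n ∈ (Ms k).1) fun k => Nat.frequently_atTop_iff_infinite.2 (Ms k).2
  refine ⟨Set.range g, Set.infinite_range_of_injective hg.injective, fun j => ?_⟩
  obtain ⟨k, rfl⟩ := he j
  refine hQ _ _ _ (hNQ (e k) (Ms k).1 (Ms k).2) ((Set.finite_Iio (k + 1)).image g |>.subset ?_)
  rintro _ ⟨⟨i, rfl⟩, hi⟩
  refine ⟨i, Set.mem_Iio.2 (lt_of_not_ge fun hki => hi ?_), rfl⟩
  exact hMs_anti hki (hgM i)

theorem exists_infinite_forall_finite_or_finite {ι S : Type*} [Countable ι]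
    (A B : ι → ℕ → Set S)
    (h : ∀ j k, StrictMono k → ¬ IsIndependent (A j ∘ k) (B j ∘ k)) :
    ∃ D : Set ℕ, D.Infinite ∧
      ∀ j s, {n ∈ D | s ∈ A j n}.Finite ∨ {n ∈ D | s ∈ B j n}.Finite := by
  have hsub (M N : Set ℕ) (p : ℕ → Prop) : {n ∈ N | p n} ⊆ {n ∈ M | p n} ∪ N \ M := by
    rintro n ⟨hnN, hn⟩
    by_cases hnM : n ∈ M
    exacts [Or.inl ⟨hnM, hn⟩, Or.inr ⟨hnN, hnM⟩]
  refine exists_infinite_forall_of_dense (fun j M N hM hNM s => ?_) fun j M hM => ?_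
  · exact (hM s).imp (fun hA => (hA.union hNM).subset (hsub M N _))
      fun hB => (hB.union hNM).subset (hsub M N _)
  · rcases exists_isIndependent_or_finite (A j) (B j) hM with ⟨k, hk, -, hind⟩ | hN
    exacts [absurd hind (h j k hk), hN]

section L1Sequence

open Pointwise

variable {X : Type*} [AddCommGroup X] [Module ℝ X]

lemma l10.exists_forall_le_eq_zero (w : l10) : ∃ n, ∀ i, n ≤ i → w.1 i = 0 := by
  obtain ⟨n, hn⟩ := (w.2 : (Function.support w.1).Finite).bddAbove
  exact ⟨n + 1, fun i hi => Function.notMem_support.1 fun h => by have := hn h; omega⟩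

lemma l10.norm_eq_sum {w : l10} {n : ℕ} (hw : ∀ i, n ≤ i → w.1 i = 0) :
    ‖w‖ = ∑ i ∈ Finset.range n, |w.1 i| := by
  rw [show ‖w‖ = ‖w.1‖ from rfl, lp.norm_eq_tsum_rpow (by norm_num),
    tsum_eq_sum (s := Finset.range n) fun i hi => ?_]
  · simp [Real.norm_eq_abs]
  · rw [hw i (by simpa using hi)]
    simp

lemma T0_eq_sum (x : ℕ → X) {w : l10} {n : ℕ} (hw : ∀ i, n ≤ i → w.1 i = 0) :
    T0 X x w = ∑ i ∈ Finset.range n, w.1 i • x i := by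
  refine finsum_eq_sum_of_support_subset _ fun i hi => ?_
  rw [Finset.coe_range, Set.mem_Iio]
  by_contra h
  exact hi (by simp [hw i (not_lt.1 h)])

noncomputable def T0ₗ (x : ℕ → X) : l10 →ₗ[ℝ] X where
  toFun := T0 X x
  map_add' a b := by
    simp only [T0, Submodule.coe_add, lp.coeFn_add, Pi.add_apply, add_smul]
    exact finsum_add_distrib (a.2.subset (Function.support_smul_subset_left _ _))
      (b.2.subset (Function.support_smul_subset_left _ _))
  map_smul' c a := by
    simp only [T0, Submodule.coe_smul, lp.coeFn_smul, Pi.smul_apply, smul_eq_mul, mul_smul,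
      RingHom.id_apply]
    exact (smul_finsum c _).symm

lemma gauge_T0_le {U : Set X} (hconv : Convex ℝ U) (hbal : Balanced ℝ U) (habs : Absorbent ℝ U)
    {x : ℕ → X} {c : ℝ} (hc : ∀ n, gauge U (x n) ≤ c) (w : l10) :
    gauge U (T0 X x w) ≤ c * ‖w‖ := by
  obtain ⟨n, hw⟩ := l10.exists_forall_le_eq_zero w
  rw [T0_eq_sum x hw, l10.norm_eq_sum hw, Finset.mul_sum]
  refine (gauge_sum_le hconv habs _ _).trans (Finset.sum_le_sum fun i _ => ?_)
  rw [gauge_smul hbal, Real.norm_eq_abs, mul_comm c]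
  exact mul_le_mul_of_nonneg_left (hc i) (abs_nonneg _)

/-- `φ` realizes the sign pattern of `w` and `ψ` the opposite one, so
`(φ - ψ) (∑ wᵢ vᵢ) ≥ (b - a) ∑ |wᵢ|`. -/
theorem exists_mem_mul_norm_le_abs {F : Type*} [FunLike F X ℝ] [LinearMapClass F ℝ X ℝ]
    {Φ : Set F} {v : ℕ → X} {a b : ℝ}
    (hind : IsIndependent (fun i => {φ ∈ Φ | φ (v i) < a}) (fun i => {φ ∈ Φ | b < φ (v i)}))
    (w : l10) : ∃ φ ∈ Φ, (b - a) / 2 * ‖w‖ ≤ |φ (T0 X v w)| := by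
  obtain ⟨n, hw⟩ := l10.exists_forall_le_eq_zero w
  have hw' : ∀ i, n + 1 ≤ i → w.1 i = 0 := fun i hi => hw i (by omega)
  obtain ⟨φ, hφ⟩ := hind (fun i => w.1 i < 0) (n + 1)
  obtain ⟨ψ, hψ⟩ := hind (fun i => 0 ≤ w.1 i) (n + 1)
  have hφΦ : φ ∈ Φ := by
    by_cases h : w.1 0 < 0
    exacts [((hφ 0 (by omega)).1 h).1, ((hφ 0 (by omega)).2 h).1]
  have hψΦ : ψ ∈ Φ := by
    by_cases h : 0 ≤ w.1 0
    exacts [((hψ 0 (by omega)).1 h).1, ((hψ 0 (by omega)).2 h).1]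
  have happly : ∀ χ : F, χ (T0 X v w) = ∑ i ∈ Finset.range (n + 1), w.1 i * χ (v i) := by
    intro χ
    simp [T0_eq_sum v hw', map_sum, map_smul]
  have hkey : (b - a) * ‖w‖ ≤ φ (T0 X v w) - ψ (T0 X v w) := by
    rw [happly, happly, ← Finset.sum_sub_distrib, l10.norm_eq_sum hw', Finset.mul_sum]
    refine Finset.sum_le_sum fun i hi => ?_
    have hi : i < n + 1 := Finset.mem_range.1 hi
    rcases lt_or_ge (w.1 i) 0 with h | h
    · have h₁ := ((hφ i hi).1 h).2
      have h₂ := ((hψ i hi).2 (not_le.2 h)).2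
      rw [abs_of_neg h]
      nlinarith
    · have h₁ := ((hφ i hi).2 (not_lt.2 h)).2
      have h₂ := ((hψ i hi).1 h).2
      rw [abs_of_nonneg h]
      nlinarith
  rcases le_total |ψ (T0 X v w)| |φ (T0 X v w)| with h | h
  · exact ⟨φ, hφΦ, by linarith [le_abs_self (φ (T0 X v w)), neg_abs_le (ψ (T0 X v w))]⟩
  · exact ⟨ψ, hψΦ, by linarith [le_abs_self (φ (T0 X v w)), neg_abs_le (ψ (T0 X v w))]⟩

variable [TopologicalSpace X] [IsTopologicalAddGroup X] [ContinuousSMul ℝ X]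

theorem continuous_T0ₗ [LocallyConvexSpace ℝ X] {x : ℕ → X}
    (hx : Bornology.IsVonNBounded ℝ (Set.range x)) : Continuous (T0ₗ x) := by
  refine continuous_of_continuousAt_zero _ ?_
  rw [ContinuousAt, map_zero]
  intro V hV
  obtain ⟨U, ⟨hU, hUbal, hUconv⟩, hUV⟩ := (nhds_hasBasis_absConvex ℝ X).mem_iff.1 hV
  obtain ⟨r, hr, hrU⟩ := (hx hU).exists_pos
  have hxU : ∀ n, gauge U (x n) ≤ r := fun n =>
    gauge_le_of_mem hr.le (hrU r (by rw [Real.norm_eq_abs, abs_of_pos hr]) ⟨n, rfl⟩)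
  refine Filter.mem_map.2 (Filter.mem_of_superset (Metric.ball_mem_nhds 0 (inv_pos.2 hr))
    fun w hw => hUV ?_)
  refine setOfPred_gauge_lt_one_subset_self hUconv (mem_of_mem_nhds hU) (absorbent_nhds_zero hU) ?_
  calc gauge U (T0 X x w) ≤ r * ‖w‖ := gauge_T0_le hUconv hUbal (absorbent_nhds_zero hU) hxU w
    _ < r * r⁻¹ := mul_lt_mul_of_pos_left (by simpa using hw) hr
    _ = 1 := mul_inv_cancel₀ hr.ne'

theorem isEmbedding_of_norm_le {E : Type*} [NormedAddCommGroup E] [NormedSpace ℝ E]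
    (T : E →ₗ[ℝ] X) (hT : Continuous T) {U : Set X} (hU : U ∈ 𝓝 0) {C : ℝ}
    (hC : ∀ w, T w ∈ U → ‖w‖ ≤ C) : IsEmbedding T := by
  refine (IsTopologicalAddGroup.isInducing_iff_nhds_zero.2 (le_antisymm ?_ ?_)).isEmbedding
  · exact (hT.tendsto' 0 0 (map_zero T)).le_comap
  refine Metric.nhds_basis_closedBall.ge_iff.2 fun ε hε => ?_
  set r := ε / (|C| + 1)
  have hr : 0 < r := by positivity
  refine Filter.mem_comap.2 ⟨r • U, (set_smul_mem_nhds_zero_iff hr.ne').2 hU, fun w hw => ?_⟩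
  rw [Set.mem_preimage, Set.mem_smul_set_iff_inv_smul_mem₀ hr.ne', ← map_smul] at hw
  have hle := hC _ hw
  rw [norm_smul, Real.norm_eq_abs, abs_inv, abs_of_pos hr, inv_mul_le_iff₀ hr] at hle
  rw [Metric.mem_closedBall, dist_zero_right]
  calc ‖w‖ ≤ r * C := hle
    _ ≤ r * (|C| + 1) := by gcongr; linarith [le_abs_self C]
    _ = ε := div_mul_cancel₀ _ (by positivity)

theorem isL1Sequence_of_isIndependent [LocallyConvexSpace ℝ X] {x : ℕ → X}
    (hx : Bornology.IsVonNBounded ℝ (Set.range x)) {U : Set X} (hU : U ∈ 𝓝 0)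
    {Φ : Set (X →L[ℝ] ℝ)} (hΦ : ∀ φ ∈ Φ, ∀ y ∈ U, |φ y| ≤ 1) {a b : ℝ} (hab : a < b)
    (hind : IsIndependent (fun i => {φ ∈ Φ | φ (x i) < a}) (fun i => {φ ∈ Φ | b < φ (x i)})) :
    IsL1Sequence X x := by
  refine isEmbedding_of_norm_le (T0ₗ x) (continuous_T0ₗ hx) hU (C := 2 / (b - a)) fun w hw => ?_
  obtain ⟨φ, hφ, hle⟩ := exists_mem_mul_norm_le_abs hind w
  have := hle.trans (hΦ φ hφ _ hw)
  rw [le_div_iff₀ (by linarith)]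
  linarith

end L1Sequence

lemma ContinuousLinearMap.exists_forall_abs_le_one {X : Type*} [AddCommGroup X] [Module ℝ X]
    [TopologicalSpace X] {ι : Type*} {p : ι → Prop} {U : ι → Set X} (hU : (𝓝 0).HasBasis p U)
    (φ : X →L[ℝ] ℝ) : ∃ m, ∀ y ∈ U m, |φ y| ≤ 1 := by
  obtain ⟨m, -, hm⟩ := hU.mem_iff.1
    (φ.continuous.tendsto' 0 0 (map_zero φ) (Metric.closedBall_mem_nhds 0 one_pos))
  exact ⟨m, fun y hy => by simpa using hm hy⟩

lemma isBounded_range_apply {X : Type*} [AddCommGroup X] [Module ℝ X] [TopologicalSpace X]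
    {x : ℕ → X} (hx : Bornology.IsVonNBounded ℝ (Set.range x)) (φ : X →L[ℝ] ℝ) :
    Bornology.IsBounded (Set.range fun n => φ (x n)) := by
  rw [← NormedSpace.isVonNBounded_iff ℝ, Set.range_comp']
  exact hx.image φ

theorem exists_tendsto_nth_of_finite_or_finite {D : Set ℕ} (hD : D.Infinite) {r : ℕ → ℝ}
    (hr : Bornology.IsBounded (Set.range r))
    (h : ∀ a b : ℚ, a < b → {n ∈ D | r n < a}.Finite ∨ {n ∈ D | b < r n}.Finite) :
    ∃ c, Tendsto (fun i => r (Nat.nth (· ∈ D) i)) atTop (𝓝 c) := by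
  have hfinite (p : ℕ → Prop) (hp : {n ∈ D | p n}.Finite) : {i | p (Nat.nth (· ∈ D) i)}.Finite :=
    (hp.preimage (Nat.nth_strictMono hD).injective.injOn).subset
      fun i hi => ⟨Nat.nth_mem_of_infinite hD i, hi⟩
  have hsub : Set.range (fun i => r (Nat.nth (· ∈ D) i)) ⊆ Set.range r :=
    Set.range_comp_subset_range _ r
  refine tendsto_of_no_upcrossings Rat.denseRange_cast ?_
    (hr.subset hsub).bddAbove.isBoundedUnder_of_range
    (hr.subset hsub).bddBelow.isBoundedUnder_of_range
  rintro _ ⟨a, rfl⟩ _ ⟨b, rfl⟩ hab ⟨ha, hb⟩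
  rw [Nat.frequently_atTop_iff_infinite] at ha hb
  rcases h a b (Rat.cast_lt.1 hab) with hfin | hfin
  exacts [ha (hfinite _ hfin), hb (hfinite _ hfin)]

theorem stmt10_general (X : Type*) [AddCommGroup X] [Module ℝ X] [TopologicalSpace X]
    [IsTopologicalAddGroup X] [ContinuousSMul ℝ X] [LocallyConvexSpace ℝ X]
    [TopologicalSpace.MetrizableSpace X]
    (x : ℕ → X) (hx : Bornology.IsVonNBounded ℝ (Set.range x)) :
    ∃ k : ℕ → ℕ, StrictMono k ∧
      ((∀ φ : X →L[ℝ] ℝ, ∃ r : ℝ,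
          Filter.Tendsto (fun j => φ (x (k j))) Filter.atTop (nhds r)) ∨
        IsL1Sequence X (x ∘ k)) := by
  obtain ⟨U, hU⟩ := (𝓝 (0 : X)).exists_antitone_basis
  let Φ : ℕ → Set (X →L[ℝ] ℝ) := fun m => {φ | ∀ y ∈ U m, |φ y| ≤ 1}
  let A : {j : ℕ × ℚ × ℚ // j.2.1 < j.2.2} → ℕ → Set (X →L[ℝ] ℝ) :=
    fun j n => {φ ∈ Φ j.1.1 | φ (x n) < j.1.2.1}
  let B : {j : ℕ × ℚ × ℚ // j.2.1 < j.2.2} → ℕ → Set (X →L[ℝ] ℝ) :=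
    fun j n => {φ ∈ Φ j.1.1 | j.1.2.2 < φ (x n)}
  by_cases hind : ∃ j k, StrictMono k ∧ IsIndependent (A j ∘ k) (B j ∘ k)
  · obtain ⟨j, k, hk, hjk⟩ := hind
    exact ⟨k, hk, Or.inr <| isL1Sequence_of_isIndependent
      (hx.subset (Set.range_comp_subset_range k x)) (hU.mem j.1.1) (fun φ hφ => hφ)
      (Rat.cast_lt.2 j.2) hjk⟩
  obtain ⟨D, hD, hDAB⟩ :=
    exists_infinite_forall_finite_or_finite A B fun j k hk h => hind ⟨j, k, hk, h⟩
  refine ⟨Nat.nth (· ∈ D), Nat.nth_strictMono hD, Or.inl fun φ => ?_⟩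
  obtain ⟨m, hm⟩ : ∃ m, φ ∈ Φ m := φ.exists_forall_abs_le_one hU.toHasBasis
  refine exists_tendsto_nth_of_finite_or_finite hD (isBounded_range_apply hx φ) fun a b hab => ?_
  simpa [A, B, hm] using hDAB ⟨(m, a, b), hab⟩ φ

theorem stmt10 (X : Type*) [AddCommGroup X] [Module ℝ X] [TopologicalSpace X]
    [IsTopologicalAddGroup X] [ContinuousSMul ℝ X] [LocallyConvexSpace ℝ X] [T2Space X]
    [TopologicalSpace.MetrizableSpace X]
    (x : ℕ → X) (hx : Bornology.IsVonNBounded ℝ (Set.range x)) :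
    ∃ k : ℕ → ℕ, StrictMono k ∧
      ((∀ φ : X →L[ℝ] ℝ, ∃ r : ℝ,
          Filter.Tendsto (fun j => φ (x (k j))) Filter.atTop (nhds r)) ∨
        IsL1Sequence X (x ∘ k)) :=
  stmt10_general X x hx
end

section
/- Let Γ be any set. On the positive cone of ℓ1(Γ) (the set of f ∈ ℓ1(Γ) with f(γ) ≥ 0 for all γ), the norm topology and the weak topology σ(ℓ1(Γ), ℓ∞(Γ)) coincide. -/
/-!
A discrete Scheffé lemma. Since `|a - b| = a + b - 2 min a b`, for nonnegative `f, g ∈ ℓ¹` and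
every finite `s` we have `‖f - g‖ ≤ ∑ f + ∑ g - 2 ∑_{γ ∈ s} min (f γ) (g γ)`. The right-hand side
only involves the coordinates and the total sum, which are weakly continuous, and at `f = g` it
is twice the tail of `g` outside `s`, which is small for large `s`.
-/

open Filter Topology
open scoped lp

lemma abs_sub_eq_add_sub_two_mul_min (a b : ℝ) : |a - b| = a + b - 2 * min a b := by
  linarith [max_sub_min_eq_abs' a b, min_add_max a b]

lemma WeakSpace.continuous_apply {𝕜 E : Type*} [CommSemiring 𝕜] [TopologicalSpace 𝕜]
    [ContinuousAdd 𝕜] [ContinuousConstSMul 𝕜 𝕜] [AddCommMonoid E] [Module 𝕜 E]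
    [TopologicalSpace E] (φ : E →L[𝕜] 𝕜) : Continuous fun x : WeakSpace 𝕜 E => φ x :=
  WeakBilin.eval_continuous _ φ

namespace lp

variable {Γ : Type*}

lemma summable_apply (f : ℓ¹(Γ, ℝ)) : Summable fun γ => f γ :=
  Memℓp.summable_of_one f.2

lemma norm_eq_tsum_abs (f : ℓ¹(Γ, ℝ)) : ‖f‖ = ∑' γ, |f γ| := by
  simpa using norm_eq_tsum_rpow (by norm_num) f

lemma summable_min (f g : ℓ¹(Γ, ℝ)) : Summable fun γ => min (f γ) (g γ) :=
  .of_norm_bounded ((summable_apply f).abs.add (summable_apply g).abs) fun _ =>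
    (abs_min_le_max_abs_abs ..).trans (max_le_add_of_nonneg (abs_nonneg _) (abs_nonneg _))

lemma norm_sub_eq_tsum_add_tsum_sub_two_mul_tsum_min (f g : ℓ¹(Γ, ℝ)) :
    ‖f - g‖ = ∑' γ, f γ + ∑' γ, g γ - 2 * ∑' γ, min (f γ) (g γ) := by
  simp only [norm_eq_tsum_abs, coeFn_sub, Pi.sub_apply, abs_sub_eq_add_sub_two_mul_min]
  rw [((summable_apply f).add (summable_apply g)).tsum_sub ((summable_min f g).mul_left 2),
    (summable_apply f).tsum_add (summable_apply g), tsum_mul_left]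

lemma norm_sub_le_of_nonneg {f g : ℓ¹(Γ, ℝ)} (hf : ∀ γ, 0 ≤ f γ) (hg : ∀ γ, 0 ≤ g γ)
    (s : Finset Γ) :
    ‖f - g‖ ≤ ∑' γ, f γ + ∑' γ, g γ - 2 * ∑ γ ∈ s, min (f γ) (g γ) := by
  have := (summable_min f g).sum_le_tsum s fun γ _ => le_min (hf γ) (hg γ)
  rw [norm_sub_eq_tsum_add_tsum_sub_two_mul_tsum_min]
  linarith

theorem tendsto_of_tendsto_apply_of_tendsto_tsum {α : Type*} {l : Filter α}
    {u : α → ℓ¹(Γ, ℝ)} {g : ℓ¹(Γ, ℝ)} (hu : ∀ a γ, 0 ≤ u a γ) (hg : ∀ γ, 0 ≤ g γ)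
    (h_apply : ∀ γ, Tendsto (fun a => u a γ) l (𝓝 (g γ)))
    (h_tsum : Tendsto (fun a => ∑' γ, u a γ) l (𝓝 (∑' γ, g γ))) :
    Tendsto u l (𝓝 g) := by
  rw [tendsto_iff_norm_sub_tendsto_zero]
  refine tendsto_order.2 ⟨fun ε hε => .of_forall fun a => hε.trans_le (norm_nonneg _),
    fun ε hε => ?_⟩
  obtain ⟨s, hs⟩ :=
    ((tendsto_tsum_compl_atTop_zero fun γ => g γ).eventually_lt_const (half_pos hε)).exists
  have h_bound : Tendsto (fun a => ∑' γ, u a γ + ∑' γ, g γ - 2 * ∑ γ ∈ s, min (u a γ) (g γ)) l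
      (𝓝 (2 * ∑' γ : {γ // γ ∉ s}, g γ)) := by
    convert (h_tsum.add_const _).sub
      ((tendsto_finsetSum s fun γ _ => (h_apply γ).min tendsto_const_nhds).const_mul 2) using 2
    rw [← (summable_apply g).sum_add_tsum_subtype_compl s]
    simp only [min_self]
    ring
  filter_upwards [h_bound.eventually_lt_const (by linarith : 2 * _ < ε)] with a ha
  exact (norm_sub_le_of_nonneg (hu a) hg s).trans_lt ha

theorem continuous_of_continuous_apply_of_continuous_tsum {X : Type*} [TopologicalSpace X]
    {v : X → ℓ¹(Γ, ℝ)} (hv : ∀ x γ, 0 ≤ v x γ) (h_apply : ∀ γ, Continuous fun x => v x γ)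
    (h_tsum : Continuous fun x => ∑' γ, v x γ) : Continuous v :=
  continuous_iff_continuousAt.2 fun x => tendsto_of_tendsto_apply_of_tendsto_tsum hv (hv x)
    (fun γ => (h_apply γ).continuousAt) h_tsum.continuousAt

end lp

theorem stmt14 (Γ : Type*) :
    TopologicalSpace.induced
        ((↑) : {f : lp (fun _ : Γ => ℝ) 1 // ∀ γ : Γ, 0 ≤ f γ} → lp (fun _ : Γ => ℝ) 1)
        inferInstance
      = TopologicalSpace.induced
        (fun f : {f : lp (fun _ : Γ => ℝ) 1 // ∀ γ : Γ, 0 ≤ f γ} =>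
          (show WeakSpace ℝ (lp (fun _ : Γ => ℝ) 1) from (f : lp (fun _ : Γ => ℝ) 1)))
        inferInstance := by
  refine le_antisymm ?_ ?_
  · exact continuous_iff_le_induced.1
      ((toWeakSpaceCLM ℝ ℓ¹(Γ, ℝ)).continuous.comp continuous_induced_dom)
  · let : TopologicalSpace {f : ℓ¹(Γ, ℝ) // ∀ γ, 0 ≤ f γ} :=
      .induced (fun f => toWeakSpace ℝ ℓ¹(Γ, ℝ) f) inferInstance
    have h_weak (φ : ℓ¹(Γ, ℝ) →L[ℝ] ℝ) :
        Continuous fun f : {f : ℓ¹(Γ, ℝ) // ∀ γ, 0 ≤ f γ} => φ f :=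
      (WeakSpace.continuous_apply φ).comp continuous_induced_dom
    exact continuous_iff_le_induced.1 <| lp.continuous_of_continuous_apply_of_continuous_tsum
      (fun f => f.2) (fun γ => h_weak (lp.evalCLM ℝ (fun _ => ℝ) 1 γ)) (h_weak (lp.tsumCLM ℝ Γ ℝ))
end
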